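/- Fix an integer d ≥ 3 and set λ := (d − 2)/2. Define h : ℕ → ℝ by h(1) := 1/4, h(2m) := m · ((2m − 3)‼)² / π for every m ≥ 1 (natural-number subtraction, so (2·1 − 3)‼ = 0‼ = 1), and h(k) := 0 for all other k (i.e. h(0) = 0 and h(2j+1) = 0 for j ≥ 1). For ℓ ∈ ℕ define β_ℓ := λ · Σ'_{m ∈ ℕ} h(ℓ + 2m) / ( 2^{ℓ+2m} · m! · (λ)_{ℓ+m+1} ), where (a)_n denotes the Pochhammer symbol a(a+1)⋯(a+n−1). Then β_{2k+1} = 0 for every k ≥ 1, and β_{k+2} ≤ β_k for every k ∈ ℕ. -/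
import Mathlib

open Polynomial

/-- The sequence of iterated derivatives at `0` of `h(u) = u(π - arccos u)/(2π)`:
`h 1 = 1/4`, `h (2m) = m ((2m-3)‼)²/π` for `m ≥ 1`, and `h k = 0` otherwise. -/
noncomputable def hDeriv (k : ℕ) : ℝ :=
  if k = 1 then 1 / 4
  else if 2 ∣ k ∧ k ≠ 0 then
    ((k / 2 : ℕ) : ℝ) * ((Nat.doubleFactorial (k - 3) : ℝ)) ^ 2 / Real.pi
  else 0

/-- The NTK spherical-harmonics coefficients
`β_ℓ = λ ∑' m, h(ℓ+2m) / (2^{ℓ+2m} m! (λ)_{ℓ+m+1})` with `λ = (d-2)/2`. -/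
noncomputable def betaCoef (d : ℕ) (ℓ : ℕ) : ℝ :=
  (((d : ℝ) - 2) / 2) *
    ∑' m : ℕ, hDeriv (ℓ + 2 * m) /
      (2 ^ (ℓ + 2 * m) * (Nat.factorial m : ℝ) *
        Polynomial.eval (((d : ℝ) - 2) / 2) (ascPochhammer ℝ (ℓ + m + 1)))

private lemma asc_eval_mono (n : ℕ) {x y : ℝ} (hx : 0 < x) (hxy : x ≤ y) :
    (ascPochhammer ℝ n).eval x ≤ (ascPochhammer ℝ n).eval y := by
  induction n with
  | zero => simp
  | succ n ih =>
    rw [ascPochhammer_succ_eval, ascPochhammer_succ_eval]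
    have h1 := ascPochhammer_pos n x hx
    have h2 := ascPochhammer_pos n y (hx.trans_le hxy)
    have hn : (0:ℝ) ≤ n := Nat.cast_nonneg n
    exact mul_le_mul ih (by linarith) (by linarith) h2.le

private lemma asc_eval_ge_pow (n : ℕ) {x : ℝ} (hx : 0 < x) :
    x ^ n ≤ (ascPochhammer ℝ n).eval x := by
  induction n with
  | zero => simp
  | succ n ih =>
    rw [ascPochhammer_succ_eval, pow_succ]
    have hn : (0:ℝ) ≤ n := Nat.cast_nonneg n
    exact mul_le_mul ih (by linarith) hx.le (ascPochhammer_pos n x hx).le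

private lemma asc_eval_add (n m : ℕ) (x : ℝ) :
    (ascPochhammer ℝ (n + m)).eval x =
      (ascPochhammer ℝ n).eval x * (ascPochhammer ℝ m).eval (x + n) := by
  rw [← ascPochhammer_mul, eval_mul, eval_comp]
  simp

private lemma df_odd (p : ℕ) :
    ((Nat.doubleFactorial (2 * p + 1) : ℕ) : ℝ)
      = 2 ^ (p+1) * (ascPochhammer ℝ (p+1)).eval (1/2) := by
  induction p with
  | zero => norm_num [Nat.doubleFactorial, ascPochhammer_one]
  | succ p ih =>
    have h : 2 * (p+1) + 1 = (2*p+1) + 2 := by ring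
    rw [h, Nat.doubleFactorial_add_two, ascPochhammer_succ_eval]
    push_cast [ih]
    ring

private lemma df_val (q : ℕ) :
    ((Nat.doubleFactorial (2 * q - 1) : ℕ) : ℝ)
      = 2 ^ q * (ascPochhammer ℝ q).eval (1/2) := by
  cases q with
  | zero => simp [Nat.doubleFactorial]
  | succ p =>
    have h : 2 * (p+1) - 1 = 2*p + 1 := by omega
    rw [h, df_odd]

private lemma hDeriv_even' (q : ℕ) :
    hDeriv (2 * (q + 1))
      = ((q:ℝ) + 1) * (2 ^ q * (ascPochhammer ℝ q).eval (1/2)) ^ 2 / Real.pi := by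
  have h1 : 2 * (q+1) ≠ 1 := by omega
  have h2 : 2 ∣ 2*(q+1) ∧ 2*(q+1) ≠ 0 := ⟨⟨q+1, rfl⟩, by omega⟩
  rw [hDeriv, if_neg h1, if_pos h2]
  have h3 : 2 * (q+1) / 2 = q + 1 := by omega
  have h4 : 2 * (q+1) - 3 = 2 * q - 1 := by omega
  rw [h3, h4, df_val]
  push_cast
  ring

private lemma hDeriv_nonneg (k : ℕ) : 0 ≤ hDeriv k := by
  rw [hDeriv]
  split_ifs with h1 h2
  · norm_num
  · have := Real.pi_pos
    positivity
  · exact le_rfl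

private lemma hDeriv_odd_big (k : ℕ) (h : ¬ 2 ∣ k) (h1 : k ≠ 1) : hDeriv k = 0 := by
  rw [hDeriv, if_neg h1, if_neg (by tauto)]

/-- The individual summand of `betaCoef`. -/
private noncomputable def bterm (d ℓ m : ℕ) : ℝ :=
  hDeriv (ℓ + 2 * m) /
    (2 ^ (ℓ + 2 * m) * (Nat.factorial m : ℝ) *
      Polynomial.eval (((d : ℝ) - 2) / 2) (ascPochhammer ℝ (ℓ + m + 1)))

private lemma betaCoef_eq (d ℓ : ℕ) :
    betaCoef d ℓ = (((d : ℝ) - 2) / 2) * ∑' m : ℕ, bterm d ℓ m := rfl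

private lemma lam_ge (d : ℕ) (hd : 3 ≤ d) : (1:ℝ)/2 ≤ ((d:ℝ) - 2)/2 := by
  have : (3:ℝ) ≤ (d:ℝ) := by exact_mod_cast hd
  linarith

private lemma bterm_nonneg (d ℓ m : ℕ) (hd : 3 ≤ d) : 0 ≤ bterm d ℓ m := by
  have hl := lam_ge d hd
  have hP := ascPochhammer_pos (ℓ + m + 1) (((d:ℝ)-2)/2) (by linarith)
  have hf : (0:ℝ) < (Nat.factorial m : ℝ) := by exact_mod_cast Nat.factorial_pos m
  exact div_nonneg (hDeriv_nonneg _) (by positivity)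

private lemma fact_le_pow (m j : ℕ) :
    (m + j).factorial ≤ m.factorial * (m + j)^j := by
  induction j with
  | zero => simp
  | succ j ih =>
    have h : (m + (j+1)).factorial = (m + j + 1) * (m + j).factorial := by
      rw [show m + (j+1) = (m+j) + 1 by ring, Nat.factorial_succ]
    rw [h]
    calc (m+j+1) * (m+j).factorial
        ≤ (m+j+1) * (m.factorial * (m+j)^j) := Nat.mul_le_mul_left _ ih
      _ = m.factorial * ((m+j+1) * (m+j)^j) := by ring
      _ ≤ m.factorial * ((m+j+1) * (m+j+1)^j) :=
          Nat.mul_le_mul_left _ (Nat.mul_le_mul_left _ (Nat.pow_le_pow_left (by omega) j))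
      _ = m.factorial * (m + (j+1))^(j+1) := by ring

private lemma bterm_bound (d j m : ℕ) (hd : 3 ≤ d) :
    bterm d (2*j) (m+1) ≤ (2:ℝ)^j / Real.pi * (1 / ((m:ℝ)+1)^2) := by
  have hπ := Real.pi_pos
  set lam : ℝ := ((d:ℝ)-2)/2 with hlamdef
  have hlam : (1:ℝ)/2 ≤ lam := lam_ge d hd
  set X : ℝ := (ascPochhammer ℝ (j+m)).eval (1/2) with hXdef
  set Y : ℝ := (ascPochhammer ℝ (j+2)).eval (1/2 + ((j:ℝ)+(m:ℝ))) with hYdef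
  set P : ℝ := (ascPochhammer ℝ (2*j + (m+1) + 1)).eval lam with hPdef
  have hX0 : 0 < X := ascPochhammer_pos _ _ (by norm_num)
  have hP0 : 0 < P := ascPochhammer_pos _ _ (by linarith)
  have hjm : (0:ℝ) ≤ (j:ℝ) + (m:ℝ) := by positivity
  have hY0 : 0 < Y := ascPochhammer_pos _ _ (by linarith)
  set N : ℝ := (j:ℝ) + (m:ℝ) + 1 with hNdef
  set c : ℝ := (m:ℝ) + 1 with hcdef
  have hN0 : (0:ℝ) < N := by rw [hNdef]; linarith
  have hc0 : (0:ℝ) < c := by rw [hcdef]; positivity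
  have hcN : c ≤ N := by
    have hj0 : (0:ℝ) ≤ (j:ℝ) := Nat.cast_nonneg j
    rw [hcdef, hNdef]
    linarith
  -- X ≤ (j+m)!
  have hX1 : X ≤ ((j+m).factorial : ℝ) := by
    have h := asc_eval_mono (j+m) (x := (1:ℝ)/2) (y := 1) (by norm_num) (by norm_num)
    rwa [ascPochhammer_eval_one] at h
  -- X*Y ≤ P
  have hXY : X * Y ≤ P := by
    have hidx : 2*j + (m+1) + 1 = (j+m) + (j+2) := by omega
    have h1 : (ascPochhammer ℝ (2*j + (m+1) + 1)).eval ((1:ℝ)/2) = X * Y := by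
      rw [hidx, asc_eval_add,
        show ((j+m : ℕ):ℝ) = (j:ℝ)+(m:ℝ) from by push_cast; ring, hXdef, hYdef]
    rw [hPdef]
    calc X * Y = (ascPochhammer ℝ (2*j + (m+1) + 1)).eval ((1:ℝ)/2) := h1.symm
      _ ≤ _ := asc_eval_mono _ (by norm_num) hlam
  -- (N/2)^(j+2) ≤ Y
  have hY1 : (N/2)^(j+2) ≤ Y := by
    refine le_trans (pow_le_pow_left₀ (by positivity) ?_ _) (asc_eval_ge_pow _ (by linarith))
    rw [hNdef]; linarith
  -- N^(j+2) ≤ 4*2^j*Y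
  have hY2 : N^(j+2) ≤ 4 * 2^j * Y := by
    have h22 : (4:ℝ) * 2^j = 2^(j+2) := by rw [pow_add]; norm_num; ring
    have h2 : N^(j+2) = 4 * 2^j * (N/2)^(j+2) := by
      rw [div_pow, h22]
      field_simp
    rw [h2]
    exact mul_le_mul_of_nonneg_left hY1 (by positivity)
  -- factorial comparison
  have hfact : ((j+m+1).factorial : ℝ) ≤ ((m+1).factorial : ℝ) * N^j := by
    have h := fact_le_pow (m+1) j
    have h2 : (m+1) + j = j + m + 1 := by omega
    rw [h2] at h
    have h3 := (Nat.cast_le (α := ℝ)).mpr h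
    push_cast at h3 ⊢
    rw [hNdef]
    convert h3 using 2
  have hNfact : N * ((j+m).factorial : ℝ) = ((j+m+1).factorial : ℝ) := by
    rw [hNdef, Nat.factorial_succ]
    push_cast
    ring
  -- the core estimate
  have T : N * X^2 * c^2 ≤ 4 * 2^j * (((m+1).factorial : ℝ)) * P := by
    have hc2 : c^2 ≤ N^2 := pow_le_pow_left₀ hc0.le hcN 2
    calc N * X^2 * c^2 = (N * X * c^2) * X := by ring
      _ ≤ (N * ((j+m).factorial : ℝ) * N^2) * X := by gcongr
      _ = (((j+m+1).factorial : ℝ) * N^2) * X := by rw [← hNfact]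
      _ ≤ ((((m+1).factorial : ℝ) * N^j) * N^2) * X := by gcongr
      _ = ((m+1).factorial : ℝ) * N^(j+2) * X := by ring
      _ ≤ ((m+1).factorial : ℝ) * (4 * 2^j * Y) * X := by
          have hf0 : (0:ℝ) ≤ ((m+1).factorial : ℝ) := by positivity
          gcongr
      _ = 4 * 2^j * ((m+1).factorial : ℝ) * (X * Y) := by ring
      _ ≤ 4 * 2^j * ((m+1).factorial : ℝ) * P := by
          have hf0 : (0:ℝ) ≤ 4 * 2^j * ((m+1).factorial : ℝ) := by positivity
          gcongr
  -- now unfold bterm and conclude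
  rw [bterm]
  have harg : 2*j + 2*(m+1) = 2*((j+m) + 1) := by ring
  rw [harg, hDeriv_even' (j+m)]
  have hrhs : (2:ℝ)^j / Real.pi * (1 / ((m:ℝ)+1)^2) = 2^j / (Real.pi * c^2) := by
    rw [hcdef, div_mul_div_comm, mul_one]
  rw [hrhs, div_div]
  have hf0 : (0:ℝ) < ((m+1).factorial : ℝ) := by exact_mod_cast Nat.factorial_pos (m+1)
  have hcastN : ((j+m : ℕ):ℝ) + 1 = N := by rw [hNdef]; push_cast; ring
  have hDpos : (0:ℝ) < Real.pi * (2 ^ (2*((j+m)+1)) * ((m+1).factorial : ℝ) * P) := by positivity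
  rw [div_le_div_iff₀ hDpos (by positivity)]
  have hXeq : ((j+m:ℕ):ℝ) = (j:ℝ) + (m:ℝ) := by push_cast; ring
  calc (((j+m:ℕ):ℝ) + 1) * (2^(j+m) * X)^2 * (Real.pi * c^2)
      = Real.pi * ((2:ℝ)^(j+m) * 2^(j+m)) * (N * X^2 * c^2) := by
        rw [hcastN]; ring
    _ ≤ Real.pi * ((2:ℝ)^(j+m) * 2^(j+m)) * (4 * 2^j * (((m+1).factorial : ℝ)) * P) := by
        have h0 : (0:ℝ) ≤ Real.pi * ((2:ℝ)^(j+m) * 2^(j+m)) := by positivity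
        gcongr
    _ = 2^j * (Real.pi * (2 ^ (2*((j+m)+1)) * ((m+1).factorial : ℝ) * P)) := by
        have e : (2:ℝ)^(2*((j+m)+1)) = 2^(j+m) * 2^(j+m) * 4 := by
          rw [show 2*((j+m)+1) = ((j+m)+(j+m))+2 from by ring, pow_add, pow_add]
          norm_num
        rw [e]
        ring

private lemma bterm_summable (d ℓ : ℕ) (hd : 3 ≤ d) : Summable (bterm d ℓ) := by
  rcases Nat.even_or_odd ℓ with he | ho
  · obtain ⟨j, hj⟩ := he
    have hj' : ℓ = 2 * j := by omega
    subst hj'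
    rw [← summable_nat_add_iff 1]
    have hg : Summable (fun m : ℕ => (2:ℝ)^j / Real.pi * (1 / ((m:ℝ)+1)^2)) := by
      have h2 : Summable (fun m : ℕ => 1 / ((m:ℝ)+1)^2) := by
        have := (summable_nat_add_iff (f := fun n : ℕ => 1 / (n:ℝ)^2) 1).mpr
          (Real.summable_one_div_nat_pow.mpr one_lt_two)
        refine this.congr fun m => ?_
        push_cast
        ring
      exact h2.mul_left _
    refine Summable.of_nonneg_of_le (fun m => bterm_nonneg d (2*j) (m+1) hd)
      (fun m => bterm_bound d j m hd) hg
  · obtain ⟨j, hj⟩ := ho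
    subst hj
    apply summable_of_ne_finset_zero (s := ({0} : Finset ℕ))
    intro m hm
    have hm1 : 1 ≤ m := by
      rcases Nat.eq_zero_or_pos m with h | h
      · exact absurd (by simp [h]) hm
      · exact h
    have hz : hDeriv (2*j + 1 + 2*m) = 0 := by
      apply hDeriv_odd_big
      · omega
      · omega
    rw [bterm, hz, zero_div]

private lemma bterm_step (d ℓ m : ℕ) (hd : 3 ≤ d) :
    bterm d (ℓ+2) m ≤ bterm d ℓ (m+1) := by
  have hlam : (1:ℝ)/2 ≤ ((d:ℝ)-2)/2 := lam_ge d hd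
  set lam : ℝ := ((d:ℝ)-2)/2 with hlamdef
  have hnum : ℓ + 2 + 2*m = ℓ + 2*(m+1) := by ring
  rw [bterm, bterm, hnum]
  set Q : ℝ := (ascPochhammer ℝ (ℓ+m+2)).eval lam with hQdef
  have hQ0 : 0 < Q := ascPochhammer_pos _ _ (by linarith)
  have hfm : (0:ℝ) < (Nat.factorial m : ℝ) := by exact_mod_cast Nat.factorial_pos m
  have hD1 : 2 ^ (ℓ + 2*(m+1)) * (Nat.factorial (m+1) : ℝ) *
      (ascPochhammer ℝ (ℓ + (m+1) + 1)).eval lam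
      = 2 ^ (ℓ + 2*(m+1)) * (Nat.factorial m : ℝ) * Q * ((m:ℝ)+1) := by
    have hidx : ℓ + (m+1) + 1 = ℓ + m + 2 := by omega
    rw [hidx, ← hQdef, Nat.factorial_succ]
    push_cast
    ring
  have hD2 : 2 ^ (ℓ + 2*(m+1)) * (Nat.factorial m : ℝ) *
      (ascPochhammer ℝ (ℓ + 2 + m + 1)).eval lam
      = 2 ^ (ℓ + 2*(m+1)) * (Nat.factorial m : ℝ) * Q * (lam + ((ℓ:ℝ)+(m:ℝ)+2)) := by
    have hidx : ℓ + 2 + m + 1 = (ℓ + m + 2) + 1 := by omega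
    rw [hidx, ascPochhammer_succ_eval, ← hQdef]
    push_cast
    ring
  rw [hD1, hD2]
  apply div_le_div_of_nonneg_left (hDeriv_nonneg _)
  · positivity
  · have hm0 : (0:ℝ) ≤ (m:ℝ) := by positivity
    have hl0 : (0:ℝ) ≤ (ℓ:ℝ) := by positivity
    have h2 : (2:ℝ)^(ℓ+2*(m+1)) * (Nat.factorial m : ℝ) * Q > 0 := by positivity
    have hle : (m:ℝ) + 1 ≤ lam + ((ℓ:ℝ)+(m:ℝ)+2) := by linarith
    exact mul_le_mul_of_nonneg_left hle h2.le

/-- For `d ≥ 3`, the NTK eigenvalue coefficients satisfy `β_{2k+1} = 0` for `k ≥ 1`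
and are nonincreasing along steps of two: `β_{k+2} ≤ β_k`. -/
theorem betaCoef_odd_zero_and_antitone (d : ℕ) (hd : 3 ≤ d) :
    (∀ k : ℕ, 1 ≤ k → betaCoef d (2 * k + 1) = 0) ∧
    (∀ k : ℕ, betaCoef d (k + 2) ≤ betaCoef d k) := by
  have hlam : (1:ℝ)/2 ≤ ((d:ℝ)-2)/2 := lam_ge d hd
  constructor
  · intro k hk
    rw [betaCoef_eq]
    have hz : ∀ m : ℕ, bterm d (2*k+1) m = 0 := by
      intro m
      have h0 : hDeriv (2*k+1 + 2*m) = 0 := by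
        apply hDeriv_odd_big
        · omega
        · omega
      rw [bterm, h0, zero_div]
    rw [tsum_congr hz, tsum_zero, mul_zero]
  · intro k
    rw [betaCoef_eq, betaCoef_eq]
    have h1 : Summable (bterm d k) := bterm_summable d k hd
    have h2 : Summable (bterm d (k+2)) := bterm_summable d (k+2) hd
    have h3 : Summable (fun m => bterm d k (m+1)) := (summable_nat_add_iff 1).mpr h1
    apply mul_le_mul_of_nonneg_left ?_ (by linarith)
    calc ∑' m, bterm d (k+2) m
        ≤ ∑' m, bterm d k (m+1) := Summable.tsum_le_tsum (fun m => bterm_step d k m hd) h2 h3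
      _ ≤ ∑' m, bterm d k m := by
          rw [Summable.tsum_eq_zero_add h1]
          exact le_add_of_nonneg_left (bterm_nonneg d k 0 hd)
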